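/- Let K be a bounded operator on a Hilbert space with ‖Kf‖ < ‖f‖ for all f ≠ 0, and suppose the essential spectrum of K*K is contained in [0, 1−ε] for some ε > 0. Then ‖K‖ < 1, and consequently Id − K is invertible with (Id − K)⁻¹ = Σ_{m=0}^∞ Kᵐ, the Neumann series converging in operator norm. -/

import Mathlib

/-!
The norm of the positive operator `K⋆K` lies in its spectrum. If it lies in the essential spectrum
it is at most `1 - ε`; otherwise it is an eigenvalue with eigenvector `f`, and then
`‖K⋆K‖ ‖f‖² = ⟪f, K⋆K f⟫ = ‖K f‖² < ‖f‖²`. Either way `‖K‖² = ‖K⋆K‖ < 1`, and the Neumann series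
of `K` converges to the inverse of `1 - K`.
-/

open scoped InnerProductSpace

/-- The essential spectrum: the spectrum minus the isolated eigenvalues of finite
multiplicity. -/
noncomputable def essentialSpectrum {H : Type*} [NormedAddCommGroup H]
    [InnerProductSpace ℂ H] [CompleteSpace H] (K : H →L[ℂ] H) : Set ℂ :=
  spectrum ℂ K \
    {z | (∃ U ∈ nhds z, U ∩ spectrum ℂ K = {z}) ∧
      (∃ f : H, f ≠ 0 ∧ K f = z • f) ∧
      FiniteDimensional ℂ (LinearMap.ker ((K - z • (1 : H →L[ℂ] H) : H →L[ℂ] H) : H →ₗ[ℂ] H))}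

open ContinuousLinearMap

theorem CStarAlgebra.norm_star_mul_self_mem_spectrum {A : Type*} [CStarAlgebra A] [PartialOrder A]
    [StarOrderedRing A] [Nontrivial A] (a : A) :
    (‖star a * a‖ : ℂ) ∈ spectrum ℂ (star a * a) :=
  (spectrum.algebraMap_mem_iff ℂ).mpr (norm_mem_spectrum_of_nonneg (star_mul_self_nonneg a))

theorem exists_eigenvector_of_notMem_essentialSpectrum {H : Type*} [NormedAddCommGroup H]
    [InnerProductSpace ℂ H] [CompleteSpace H] {K : H →L[ℂ] H} {z : ℂ} (hz : z ∈ spectrum ℂ K)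
    (hess : z ∉ essentialSpectrum K) : ∃ f : H, f ≠ 0 ∧ K f = z • f := by
  by_contra hf
  exact hess ⟨hz, fun h => hf h.2.1⟩

section AdjointMulSelf

variable {𝕜 E F : Type*} [RCLike 𝕜] [NormedAddCommGroup E] [InnerProductSpace 𝕜 E]
  [NormedAddCommGroup F] [InnerProductSpace 𝕜 F] [CompleteSpace E] [CompleteSpace F]

theorem eigenvalue_adjoint_mul_self_mul_norm_sq {K : E →L[𝕜] F} {z : 𝕜} {f : E}
    (hf : (adjoint K ∘L K) f = z • f) : z * (‖f‖ : 𝕜) ^ 2 = (‖K f‖ : 𝕜) ^ 2 := by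
  calc z * (‖f‖ : 𝕜) ^ 2 = ⟪f, (adjoint K ∘L K) f⟫_𝕜 := by
        rw [hf, inner_smul_right, inner_self_eq_norm_sq_to_K]
    _ = (‖K f‖ : 𝕜) ^ 2 := by
        rw [comp_apply, adjoint_inner_right, inner_self_eq_norm_sq_to_K]

theorem eigenvalue_adjoint_mul_self_lt_one {K : E →L[𝕜] F} (hcontr : ∀ f : E, f ≠ 0 → ‖K f‖ < ‖f‖)
    {t : ℝ} {f : E} (hf0 : f ≠ 0) (hf : (adjoint K ∘L K) f = (t : 𝕜) • f) : t < 1 := by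
  have heq : t * ‖f‖ ^ 2 = ‖K f‖ ^ 2 := by
    exact_mod_cast eigenvalue_adjoint_mul_self_mul_norm_sq hf
  have hKf : ‖K f‖ ^ 2 < ‖f‖ ^ 2 := pow_lt_pow_left₀ (hcontr f hf0) (norm_nonneg _) two_ne_zero
  have hfpos : 0 < ‖f‖ ^ 2 := by positivity
  nlinarith

end AdjointMulSelf

theorem stmt_3 {H : Type*} [NormedAddCommGroup H] [InnerProductSpace ℂ H] [CompleteSpace H]
    (K : H →L[ℂ] H)
    (hcontr : ∀ f : H, f ≠ 0 → ‖K f‖ < ‖f‖)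
    (ε : ℝ) (hε : 0 < ε)
    (hess : essentialSpectrum (ContinuousLinearMap.adjoint K * K) ⊆
      {z : ℂ | ∃ x : ℝ, z = (x : ℂ) ∧ 0 ≤ x ∧ x ≤ 1 - ε}) :
    ‖K‖ < 1 ∧ ∃ S : H →L[ℂ] H, HasSum (fun m : ℕ => K ^ m) S ∧
      (1 - K) * S = 1 ∧ S * (1 - K) = 1 := by
  have hK : ‖K‖ < 1 := by
    rcases subsingleton_or_nontrivial H with _ | _
    · simp [Subsingleton.elim K 0]
    have hspec := CStarAlgebra.norm_star_mul_self_mem_spectrum K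
    rw [star_eq_adjoint] at hspec
    suffices ‖adjoint K * K‖ < 1 by
      rw [← star_eq_adjoint, CStarRing.norm_star_mul_self] at this
      nlinarith [norm_nonneg K]
    by_cases hmem : (‖adjoint K * K‖ : ℂ) ∈ essentialSpectrum (adjoint K * K)
    · obtain ⟨x, hx, -, hx1⟩ := hess hmem
      have : ‖adjoint K * K‖ = x := by exact_mod_cast hx
      linarith
    · obtain ⟨f, hf0, hf⟩ := exists_eigenvector_of_notMem_essentialSpectrum hspec hmem
      exact eigenvalue_adjoint_mul_self_lt_one hcontr hf0 hf
  exact ⟨hK, _, (summable_geometric_of_norm_lt_one hK).hasSum, mul_neg_geom_series K hK,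
    geom_series_mul_neg K hK⟩
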